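/- arXiv:1306.3483 — 8 statements merged into one kernel-verified Lean document; each statement's English description precedes it below -/
import Mathlib

section
/- For a twice continuously differentiable function f : ℝ² → ℝ and an affine transformation T : ℝ² → ℝ² whose linear part has determinant J ≠ 0, the Hessian determinant of the function (x,y) ↦ f(T(x,y))/J equals (Hess f) ∘ T, where Hess f = f_xx f_yy − f_xy². Consequently, any plane curve affinely equivalent to a Hessian curve is itself a Hessian curve. -/
/-!
With `F = uncurry f`, `Hess f x y` is the discriminant `B₁₁ B₂₂ - B₁₂²` of the symmetric bilinear
form `B = D²F (x, y)` in the standard basis. For an affine map `T = A · + b` the chain rule gives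
`D²(F ∘ T) p (v, w) = D²F (T p) (A v, A w)`, so the Gram matrix of the form changes to `Aᵀ B A`
and its determinant picks up the factor `(det A)²`; dividing by `J = det A` removes it again.
The function `f ∘ T / J` then witnesses that `(Hess f) ∘ T` is a Hessian.
-/

noncomputable def Hess (f : ℝ → ℝ → ℝ) (x y : ℝ) : ℝ :=
  deriv (fun t => deriv (fun s => f s y) t) x *
    deriv (fun t => deriv (fun s => f x s) t) y -
    (deriv (fun t => deriv (fun s => f s t) x) y) ^ 2

open Function

section Calculus

variable {𝕜 E E' G : Type*} [NontriviallyNormedField 𝕜]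
  [NormedAddCommGroup E] [NormedSpace 𝕜 E] [NormedAddCommGroup E'] [NormedSpace 𝕜 E']
  [NormedAddCommGroup G] [NormedSpace 𝕜 G]

theorem fderiv_fderiv_comp_affine_apply {F : E' → G} (hF : ContDiff 𝕜 2 F) (L : E →L[𝕜] E')
    (q : E') (p v w : E) :
    fderiv 𝕜 (fderiv 𝕜 fun z => F (L z + q)) p v w =
      fderiv 𝕜 (fderiv 𝕜 F) (L p + q) (L v) (L w) := by
  have hFq : ContDiff 𝕜 2 fun z => F (z + q) := hF.comp (contDiff_id.add contDiff_const)
  calc fderiv 𝕜 (fderiv 𝕜 fun z => F (L z + q)) p v w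
      = iteratedFDeriv 𝕜 2 ((fun z => F (z + q)) ∘ L) p ![v, w] := by
        rw [iteratedFDeriv_two_apply]; rfl
    _ = iteratedFDeriv 𝕜 2 F (L p + q) ![L v, L w] := by
        rw [L.iteratedFDeriv_comp_right hFq p le_rfl, iteratedFDeriv_comp_add_right,
          ContinuousMultilinearMap.compContinuousLinearMap_apply]
        congr 1
        ext i
        fin_cases i <;> rfl
    _ = fderiv 𝕜 (fderiv 𝕜 F) (L p + q) (L v) (L w) := iteratedFDeriv_two_apply _ _ _

end Calculus

section Partial

variable {E : Type*} [NormedAddCommGroup E] [NormedSpace ℝ E]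

theorem HasFDerivAt.hasDerivAt_comp_prodMk_left {G : ℝ × ℝ → E} {G' : ℝ × ℝ →L[ℝ] E} {x y : ℝ}
    (hG : HasFDerivAt G G' (x, y)) : HasDerivAt (fun s => G (s, y)) (G' (1, 0)) x :=
  hG.comp_hasDerivAt x ((hasDerivAt_id x).prodMk (hasDerivAt_const x y))

theorem HasFDerivAt.hasDerivAt_comp_prodMk_right {G : ℝ × ℝ → E} {G' : ℝ × ℝ →L[ℝ] E} {x y : ℝ}
    (hG : HasFDerivAt G G' (x, y)) : HasDerivAt (fun t => G (x, t)) (G' (0, 1)) y :=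
  hG.comp_hasDerivAt y ((hasDerivAt_const y x).prodMk (hasDerivAt_id y))

end Partial

theorem hess_eq_fderiv_fderiv {f : ℝ → ℝ → ℝ} (hf : ContDiff ℝ 2 (uncurry f)) (x y : ℝ) :
    Hess f x y =
      fderiv ℝ (fderiv ℝ (uncurry f)) (x, y) (1, 0) (1, 0) *
        fderiv ℝ (fderiv ℝ (uncurry f)) (x, y) (0, 1) (0, 1) -
      fderiv ℝ (fderiv ℝ (uncurry f)) (x, y) (0, 1) (1, 0) ^ 2 := by
  have hF : Differentiable ℝ (uncurry f) := hf.differentiable two_ne_zero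
  have hF' : Differentiable ℝ (fderiv ℝ (uncurry f)) :=
    (hf.fderiv_right one_add_one_eq_two.le).differentiable one_ne_zero
  have d₁ : ∀ s t, deriv (fun r => f r t) s = fderiv ℝ (uncurry f) (s, t) (1, 0) :=
    fun s t => (hF (s, t)).hasFDerivAt.hasDerivAt_comp_prodMk_left.deriv
  have d₂ : ∀ s t, deriv (fun r => f s r) t = fderiv ℝ (uncurry f) (s, t) (0, 1) :=
    fun s t => (hF (s, t)).hasFDerivAt.hasDerivAt_comp_prodMk_right.deriv
  have d₁₁ : deriv (fun s => fderiv ℝ (uncurry f) (s, y) (1, 0)) x =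
      fderiv ℝ (fderiv ℝ (uncurry f)) (x, y) (1, 0) (1, 0) := by
    simpa using ((hF' (x, y)).hasFDerivAt.hasDerivAt_comp_prodMk_left.clm_apply
      (hasDerivAt_const x ((1, 0) : ℝ × ℝ))).deriv
  have d₂₂ : deriv (fun t => fderiv ℝ (uncurry f) (x, t) (0, 1)) y =
      fderiv ℝ (fderiv ℝ (uncurry f)) (x, y) (0, 1) (0, 1) := by
    simpa using ((hF' (x, y)).hasFDerivAt.hasDerivAt_comp_prodMk_right.clm_apply
      (hasDerivAt_const y ((0, 1) : ℝ × ℝ))).deriv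
  have d₂₁ : deriv (fun t => fderiv ℝ (uncurry f) (x, t) (1, 0)) y =
      fderiv ℝ (fderiv ℝ (uncurry f)) (x, y) (0, 1) (1, 0) := by
    simpa using ((hF' (x, y)).hasFDerivAt.hasDerivAt_comp_prodMk_right.clm_apply
      (hasDerivAt_const y ((1, 0) : ℝ × ℝ))).deriv
  simp only [Hess, d₁, d₂, d₁₁, d₂₂, d₂₁]

theorem bilin_discr_comp_linear (B : ℝ × ℝ →L[ℝ] ℝ × ℝ →L[ℝ] ℝ)
    (hB : B (0, 1) (1, 0) = B (1, 0) (0, 1)) (a b c d : ℝ) :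
    B (a, c) (a, c) * B (b, d) (b, d) - B (b, d) (a, c) ^ 2 =
      (a * d - b * c) ^ 2 * (B (1, 0) (1, 0) * B (0, 1) (0, 1) - B (0, 1) (1, 0) ^ 2) := by
  have basis : ∀ u v : ℝ, ((u, v) : ℝ × ℝ) = u • (1, 0) + v • (0, 1) := by simp
  rw [basis a c, basis b d]
  simp only [map_add, map_smul, add_apply, smul_apply, smul_eq_mul, hB]
  ring

theorem hess_div_const (f : ℝ → ℝ → ℝ) (c x y : ℝ) :
    Hess (fun u v => f u v / c) x y = Hess f x y / c ^ 2 := by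
  simp only [Hess, deriv_div_const]
  ring

theorem hess_comp_affine {f : ℝ → ℝ → ℝ} (hf : ContDiff ℝ 2 (uncurry f)) (a b c d p q x y : ℝ) :
    Hess (fun u v => f (a * u + b * v + p) (c * u + d * v + q)) x y =
      (a * d - b * c) ^ 2 * Hess f (a * x + b * y + p) (c * x + d * y + q) := by
  let L : ℝ × ℝ →L[ℝ] ℝ × ℝ :=
    LinearMap.toContinuousLinearMap (Matrix.toLin (.finTwoProd ℝ) (.finTwoProd ℝ) !![a, b; c, d])
  have hL : ∀ z, L z = (a * z.1 + b * z.2, c * z.1 + d * z.2) :=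
    Matrix.toLin_finTwoProd_apply a b c d
  have hcomp : uncurry (fun u v => f (a * u + b * v + p) (c * u + d * v + q)) =
      fun z => uncurry f (L z + (p, q)) := by
    ext ⟨u, v⟩
    simp [hL]
  have hG : ContDiff ℝ 2 (uncurry fun u v => f (a * u + b * v + p) (c * u + d * v + q)) :=
    hcomp ▸ hf.comp (L.contDiff.add contDiff_const)
  have hsymm := (hf.contDiffAt (x := (a * x + b * y + p, c * x + d * y + q))).isSymmSndFDerivAt
    (by simp)
  rw [hess_eq_fderiv_fderiv hG, hcomp, hess_eq_fderiv_fderiv hf]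
  simp only [fderiv_fderiv_comp_affine_apply hf]
  simp only [hL, Prod.mk_add_mk, mul_one, mul_zero, add_zero, zero_add]
  exact bilin_discr_comp_linear _ (hsymm _ _) a b c d

theorem hessian_affine_transform
    (f : ℝ → ℝ → ℝ) (hf : ContDiff ℝ 2 (Function.uncurry f))
    (A : Matrix (Fin 2) (Fin 2) ℝ) (b : Fin 2 → ℝ)
    (hJ : A.det ≠ 0)
    (T₁ T₂ : ℝ → ℝ → ℝ)
    (hT₁ : ∀ x y, T₁ x y = A 0 0 * x + A 0 1 * y + b 0)
    (hT₂ : ∀ x y, T₂ x y = A 1 0 * x + A 1 1 * y + b 1) :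
    (∀ x y, Hess (fun u v => f (T₁ u v) (T₂ u v) / A.det) x y
        = Hess f (T₁ x y) (T₂ x y)) ∧
    (∀ g : ℝ → ℝ → ℝ, (∀ x y, g x y = Hess f (T₁ x y) (T₂ x y)) →
      ∃ h : ℝ → ℝ → ℝ, ∀ x y, Hess h x y = g x y) := by
  obtain rfl : T₁ = fun x y => A 0 0 * x + A 0 1 * y + b 0 := funext₂ hT₁
  obtain rfl : T₂ = fun x y => A 1 0 * x + A 1 1 * y + b 1 := funext₂ hT₂
  have hess_eq : ∀ x y, Hess (fun u v => f (A 0 0 * u + A 0 1 * v + b 0)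
      (A 1 0 * u + A 1 1 * v + b 1) / A.det) x y =
      Hess f (A 0 0 * x + A 0 1 * y + b 0) (A 1 0 * x + A 1 1 * y + b 1) := by
    intro x y
    rw [hess_div_const, hess_comp_affine hf, ← Matrix.det_fin_two,
      mul_div_cancel_left₀ _ (pow_ne_zero 2 hJ)]
  exact ⟨hess_eq, fun g hg => ⟨_, fun x y => (hess_eq x y).trans (hg x y).symm⟩⟩
end

section
/- Let f(x,y) = ∏_{i=1}^n (x² + y² − m_i²) with 0 < m_1 < m_2 < ⋯ < m_n. Then the Hessian determinant of f factors as Hess f(x,y) = 4 s(x,y) t(x,y), where s(x,y) = Σ_{j=1}^n ∏_{i≠j} (x² + y² − m_i²) and t(x,y) = Σ_{j=1}^n ∏_{i≠j}(x² + y² − m_i²) + 2(x² + y²) Σ_{j=1}^n Σ_{l≠j} ∏_{i≠j,l}(x² + y² − m_i²). -/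
/-!
The function is radial, `f x y = P (x² + y²)` with `P = ∏ i, (X - m_i²)`, and for any radial
`g (x² + y²)` the Hessian is `4 g'(r) (g'(r) + 2 r g''(r))` at `r = x² + y²`. The two sums in the
statement are exactly `P'(r)` and `P''(r)`, by the product rule.
-/

open Polynomial Finset

section RadialHessian

variable {g g' g'' : ℝ → ℝ}

lemma hasDerivAt_comp_sq_add (hg : ∀ u, HasDerivAt g (g' u) u) (c x : ℝ) :
    HasDerivAt (fun s => g (s ^ 2 + c)) (g' (x ^ 2 + c) * (2 * x)) x := by
  have hsq : HasDerivAt (fun s : ℝ => s ^ 2 + c) (2 * x) x := by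
    simpa using (hasDerivAt_pow 2 x).add_const c
  exact (hg _).comp x hsq

lemma deriv_comp_sq_add (hg : ∀ u, HasDerivAt g (g' u) u) (c : ℝ) :
    deriv (fun s => g (s ^ 2 + c)) = fun s => g' (s ^ 2 + c) * (2 * s) :=
  funext fun s => (hasDerivAt_comp_sq_add hg c s).deriv

lemma deriv_deriv_comp_sq_add (hg : ∀ u, HasDerivAt g (g' u) u)
    (hg' : ∀ u, HasDerivAt g' (g'' u) u) (c x : ℝ) :
    deriv (fun t => deriv (fun s => g (s ^ 2 + c)) t) x =
      g'' (x ^ 2 + c) * (2 * x) * (2 * x) + g' (x ^ 2 + c) * 2 := by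
  rw [deriv_comp_sq_add hg]
  exact ((hasDerivAt_comp_sq_add hg' c x).mul
    (by simpa using (hasDerivAt_id x).const_mul 2)).deriv

-- The `g''²` terms of `f_xx f_yy` and `f_xy²` cancel.
theorem hess_comp_sq_add_sq (hg : ∀ u, HasDerivAt g (g' u) u)
    (hg' : ∀ u, HasDerivAt g' (g'' u) u) (x y : ℝ) :
    Hess (fun a b => g (a ^ 2 + b ^ 2)) x y =
      4 * g' (x ^ 2 + y ^ 2) * (g' (x ^ 2 + y ^ 2) + 2 * (x ^ 2 + y ^ 2) * g'' (x ^ 2 + y ^ 2)) := by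
  have hyx : (fun s => g (x ^ 2 + s ^ 2)) = fun s => g (s ^ 2 + x ^ 2) := by
    simp only [add_comm]
  have hxy : (fun t => deriv (fun s => g (s ^ 2 + t ^ 2)) x) =
      fun t => g' (t ^ 2 + x ^ 2) * (2 * x) := by
    funext t
    rw [deriv_comp_sq_add hg, add_comm]
  simp only [Hess, hyx, hxy, deriv_deriv_comp_sq_add hg hg',
    ((hasDerivAt_comp_sq_add hg' (x ^ 2) y).mul_const (2 * x)).deriv, add_comm (y ^ 2)]
  ring

end RadialHessian

section ProdXSubC

variable {R ι : Type*} [CommRing R] [DecidableEq ι]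

lemma derivative_prod_X_sub_C (s : Finset ι) (a : ι → R) :
    derivative (∏ i ∈ s, (X - C (a i))) = ∑ j ∈ s, ∏ i ∈ s.erase j, (X - C (a i)) := by
  simp only [derivative_prod_finset, derivative_X_sub_C, mul_one]

lemma derivative_derivative_prod_X_sub_C (s : Finset ι) (a : ι → R) :
    derivative (derivative (∏ i ∈ s, (X - C (a i)))) =
      ∑ j ∈ s, ∑ l ∈ s.erase j, ∏ i ∈ (s.erase j).erase l, (X - C (a i)) := by
  simp only [derivative_prod_X_sub_C, map_sum]

end ProdXSubC

open Finset in
theorem hessian_product_circles_even_general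
    (n : ℕ) (m : Fin n → ℝ)
    (f : ℝ → ℝ → ℝ)
    (hf : ∀ x y, f x y = ∏ i : Fin n, (x ^ 2 + y ^ 2 - m i ^ 2)) :
    ∀ x y, Hess f x y =
      4 * (∑ j : Fin n, ∏ i ∈ univ.erase j, (x ^ 2 + y ^ 2 - m i ^ 2)) *
        ((∑ j : Fin n, ∏ i ∈ univ.erase j, (x ^ 2 + y ^ 2 - m i ^ 2)) +
          2 * (x ^ 2 + y ^ 2) *
            ∑ j : Fin n, ∑ l ∈ univ.erase j,
              ∏ i ∈ (univ.erase j).erase l, (x ^ 2 + y ^ 2 - m i ^ 2)) := by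
  intro x y
  set P : ℝ[X] := ∏ i : Fin n, (X - C (m i ^ 2))
  have hfP : f = fun a b => P.eval (a ^ 2 + b ^ 2) := by
    funext a b
    simp [hf, P, eval_prod]
  rw [hfP, hess_comp_sq_add_sq (fun u => P.hasDerivAt u) (fun u => P.derivative.hasDerivAt u),
    derivative_derivative_prod_X_sub_C, derivative_prod_X_sub_C]
  simp only [eval_finsetSum, eval_prod, eval_sub, eval_X, eval_C]

open Finset in
theorem hessian_product_circles_even
    (n : ℕ) (m : Fin n → ℝ) (hpos : ∀ i, 0 < m i) (hmono : StrictMono m)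
    (f : ℝ → ℝ → ℝ)
    (hf : ∀ x y, f x y = ∏ i : Fin n, (x ^ 2 + y ^ 2 - m i ^ 2)) :
    ∀ x y, Hess f x y =
      4 * (∑ j : Fin n, ∏ i ∈ univ.erase j, (x ^ 2 + y ^ 2 - m i ^ 2)) *
        ((∑ j : Fin n, ∏ i ∈ univ.erase j, (x ^ 2 + y ^ 2 - m i ^ 2)) +
          2 * (x ^ 2 + y ^ 2) *
            ∑ j : Fin n, ∑ l ∈ univ.erase j,
              ∏ i ∈ (univ.erase j).erase l, (x ^ 2 + y ^ 2 - m i ^ 2)) :=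
  hessian_product_circles_even_general n m f hf
end

section
/- Let f(x,y) = ∏_{i=1}^n (x² + y² − m_i²) with 0 < m_1 < ⋯ < m_n and n ≥ 2. Then the zero set of Hess f in ℝ² is a disjoint union of exactly 2(n−1) circles centered at the origin, i.e. there exist radii 0 < r_1 < r_2 < ⋯ < r_{2(n−1)} such that Hess f(x,y) = 0 iff x² + y² = r_k² for some k. -/
open Polynomial

lemma Polynomial.hasDerivAt_eval_sq_add (p : ℝ[X]) (c x : ℝ) :
    HasDerivAt (fun s => p.eval (s ^ 2 + c)) (p.derivative.eval (x ^ 2 + c) * (2 * x)) x := by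
  simpa [Function.comp_def] using (p.hasDerivAt _).comp x ((hasDerivAt_pow 2 x).add_const c)

lemma Polynomial.hasDerivAt_eval_add_sq (p : ℝ[X]) (c x : ℝ) :
    HasDerivAt (fun s => p.eval (c + s ^ 2)) (p.derivative.eval (c + x ^ 2) * (2 * x)) x := by
  simpa [add_comm c] using p.hasDerivAt_eval_sq_add c x

theorem hess_eval_sq_add_sq (p : ℝ[X]) (x y : ℝ) :
    Hess (fun x y => p.eval (x ^ 2 + y ^ 2)) x y =
      4 * (X * derivative p ^ 2).derivative.eval (x ^ 2 + y ^ 2) := by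
  have hd₁ (c : ℝ) := _root_.funext fun x => (p.hasDerivAt_eval_sq_add c x).deriv
  have hd₂ (c : ℝ) := _root_.funext fun x => (p.hasDerivAt_eval_add_sq c x).deriv
  simp only [Hess, hd₁, hd₂]
  rw [((p.derivative.hasDerivAt_eval_sq_add _ x).fun_mul ((hasDerivAt_id' x).const_mul 2)).deriv,
    ((p.derivative.hasDerivAt_eval_add_sq _ y).fun_mul ((hasDerivAt_id' y).const_mul 2)).deriv,
    ((p.derivative.hasDerivAt_eval_add_sq _ y).mul_const (2 * x)).deriv]
  simp only [derivative_mul, derivative_X, derivative_pow, eval_add, eval_mul, eval_X, eval_one,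
    eval_pow, eval_C]
  ring

section Interlacing

variable {k : ℕ} {a : Fin (k + 1) → ℝ} {b : Fin k → ℝ}

lemma StrictMono.of_mem_Ioo_castSucc_succ (ha : Monotone a)
    (hb : ∀ i, b i ∈ Set.Ioo (a i.castSucc) (a i.succ)) : StrictMono b :=
  fun i j hij => (hb i).2.trans ((ha (Fin.succ_le_castSucc_iff.2 hij)).trans_lt (hb j).1)

lemma StrictMono.ne_of_mem_Ioo_castSucc_succ (ha : StrictMono a) {i : Fin k} {x : ℝ}
    (hx : x ∈ Set.Ioo (a i.castSucc) (a i.succ)) (j : Fin (k + 1)) : x ≠ a j := by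
  rintro rfl
  exact (Fin.castSucc_lt_iff_succ_le.1 (ha.lt_iff_lt.1 hx.1)).not_gt (ha.lt_iff_lt.1 hx.2)

theorem Polynomial.exists_isRoot_derivative_mem_Ioo (p : ℝ[X]) (ha : StrictMono a)
    (hroot : ∀ i, p.IsRoot (a i)) :
    ∃ b : Fin k → ℝ, (∀ i, b i ∈ Set.Ioo (a i.castSucc) (a i.succ)) ∧
      ∀ i, p.derivative.IsRoot (b i) := by
  have (i : Fin k) : ∃ x ∈ Set.Ioo (a i.castSucc) (a i.succ), p.derivative.IsRoot x := by
    obtain ⟨x, hx, hx0⟩ := exists_deriv_eq_zero (ha i.castSucc_lt_succ) p.continuousOn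
      ((hroot _).trans (hroot _).symm)
    exact ⟨x, hx, by rwa [Polynomial.deriv] at hx0⟩
  choose b hb hbroot using this
  exact ⟨b, hb, hbroot⟩

end Interlacing

lemma Polynomial.IsRoot.derivative_X_mul_sq {R : Type*} [CommRing R] {p : R[X]} {x : R}
    (h : p.IsRoot x) : (X * p ^ 2).derivative.IsRoot x := by
  simp [h.eq_zero, derivative_mul, derivative_pow]

theorem Polynomial.isRoot_iff_mem_of_natDegree_le_card {R : Type*} [CommRing R] [IsDomain R]
    {p : R[X]} (hp : p ≠ 0) {s : Finset R} (hs : ∀ x ∈ s, p.IsRoot x)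
    (hcard : p.natDegree ≤ s.card) (x : R) : p.IsRoot x ↔ x ∈ s := by
  classical
  have hsub : s ⊆ p.roots.toFinset := fun x hx => by simpa [hp] using hs x hx
  have hroots : s = p.roots.toFinset := Finset.eq_of_subset_of_card_le hsub <|
    calc p.roots.toFinset.card ≤ Multiset.card p.roots := Multiset.toFinset_card_le _
      _ ≤ p.natDegree := card_roots' p
      _ ≤ s.card := hcard
  rw [hroots, Multiset.mem_toFinset, mem_roots hp]

lemma Polynomial.natDegree_X_mul_derivative_sq {R : Type*} [CommRing R] [IsDomain R]
    [CharZero R] {p : R[X]} (hp : p.natDegree ≠ 0) :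
    (X * derivative p ^ 2).natDegree = 2 * p.natDegree - 1 := by
  rw [natDegree_mul X_ne_zero (pow_ne_zero 2 (derivative_ne_zero.2 hp)), natDegree_pow,
    natDegree_derivative, natDegree_X]
  omega

theorem Polynomial.exists_finset_roots_derivative_X_mul_derivative_sq {k : ℕ} {p : ℝ[X]}
    {a : Fin (k + 1) → ℝ} (hdeg : p.natDegree = k + 1) (ha : StrictMono a) (ha0 : 0 < a 0)
    (hroot : ∀ i, p.IsRoot (a i)) :
    ∃ s : Finset ℝ, s.card = 2 * k ∧ (∀ x ∈ s, 0 < x) ∧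
      ∀ x, (X * derivative p ^ 2).derivative.IsRoot x ↔ x ∈ s := by
  obtain ⟨c, hc, hcroot⟩ := p.exists_isRoot_derivative_mem_Ioo ha hroot
  have hcmono : StrictMono c := .of_mem_Ioo_castSucc_succ ha.monotone hc
  have hcpos (i : Fin k) : 0 < c i := ha0.trans_le (ha.monotone (Fin.zero_le _)) |>.trans (hc i).1
  set t : Fin (k + 1) → ℝ := Fin.cons 0 c
  have ht : StrictMono t := Fin.strictMono_cons.2 ⟨hcpos, hcmono⟩
  have htroot : ∀ i, (X * derivative p ^ 2).IsRoot (t i) :=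
    Fin.cases (by simp [t]) fun i => by simp [t, (hcroot i).eq_zero]
  -- The `c i` are double roots of `X * p' ^ 2`; Rolle between them produces the other roots.
  obtain ⟨b, hb, hbroot⟩ := (X * derivative p ^ 2).exists_isRoot_derivative_mem_Ioo ht htroot
  have hbmono : StrictMono b := .of_mem_Ioo_castSucc_succ ht.monotone hb
  have hdisj : Disjoint (Finset.univ.image b) (Finset.univ.image c) := by
    simp only [Finset.disjoint_left, Finset.mem_image, Finset.mem_univ, true_and]
    rintro _ ⟨i, rfl⟩ ⟨j, hj⟩
    exact ht.ne_of_mem_Ioo_castSucc_succ (hb i) j.succ (by simpa [t] using hj.symm)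
  have hcard : (Finset.univ.image b ∪ Finset.univ.image c).card = 2 * k := by
    rw [Finset.card_union_of_disjoint hdisj, Finset.card_image_of_injective _ hbmono.injective,
      Finset.card_image_of_injective _ hcmono.injective, Finset.card_univ, Fintype.card_fin]
    ring
  have hdeg' := natDegree_X_mul_derivative_sq (p := p) (by omega)
  refine ⟨_, hcard, ?_, isRoot_iff_mem_of_natDegree_le_card ?_ ?_ ?_⟩
  · simp only [Finset.mem_union, Finset.mem_image, Finset.mem_univ, true_and]
    rintro _ (⟨i, rfl⟩ | ⟨i, rfl⟩)
    · exact (ht.monotone (Fin.zero_le _)).trans_lt (hb i).1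
    · exact hcpos i
  · exact derivative_ne_zero.2 (by rw [hdeg', hdeg]; omega)
  · simp only [Finset.mem_union, Finset.mem_image, Finset.mem_univ, true_and]
    rintro _ (⟨i, rfl⟩ | ⟨i, rfl⟩)
    · exact hbroot i
    · exact (hcroot i).derivative_X_mul_sq
  · rw [natDegree_derivative, hdeg', hdeg, hcard]
    omega

lemma Finset.exists_strictMono_sq_eq {s : Finset ℝ} {N : ℕ} (hN : s.card = N)
    (hs : ∀ x ∈ s, 0 < x) :
    ∃ r : Fin N → ℝ, StrictMono r ∧ (∀ k, 0 < r k) ∧ ∀ x, x ∈ s ↔ ∃ k, x = r k ^ 2 := by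
  set e := s.orderIsoOfFin hN
  refine ⟨fun k => √(e k), fun k l hkl => Real.sqrt_lt_sqrt (hs _ (e k).2).le (e.strictMono hkl),
    fun k => Real.sqrt_pos.2 (hs _ (e k).2), fun x => ?_⟩
  constructor
  · intro hx
    refine ⟨e.symm ⟨x, hx⟩, ?_⟩
    dsimp only
    rw [OrderIso.apply_symm_apply, Real.sq_sqrt (hs x hx).le]
  · rintro ⟨k, rfl⟩
    rw [Real.sq_sqrt (hs _ (e k).2).le]
    exact (e k).2

theorem hessian_zero_set_is_concentric_circles
    (n : ℕ) (hn : 2 ≤ n) (m : Fin n → ℝ) (hpos : ∀ i, 0 < m i)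
    (hmono : StrictMono m)
    (f : ℝ → ℝ → ℝ)
    (hf : ∀ x y, f x y = ∏ i : Fin n, (x ^ 2 + y ^ 2 - m i ^ 2)) :
    ∃ r : Fin (2 * (n - 1)) → ℝ, StrictMono r ∧ (∀ k, 0 < r k) ∧
      ∀ x y : ℝ, Hess f x y = 0 ↔ ∃ k, x ^ 2 + y ^ 2 = r k ^ 2 := by
  obtain ⟨k, rfl⟩ : ∃ k, n = k + 1 := ⟨n - 1, by omega⟩
  set P : ℝ[X] := ∏ i, (X - C (m i ^ 2))
  have hfP : f = fun x y => P.eval (x ^ 2 + y ^ 2) := by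
    ext x y
    simp [hf, P, eval_prod]
  have hsq : StrictMono fun i => m i ^ 2 := fun i j h =>
    pow_lt_pow_left₀ (hmono h) (hpos i).le two_ne_zero
  have hdeg : P.natDegree = k + 1 := by
    rw [natDegree_finsetProd_X_sub_C_eq_card, Finset.card_univ, Fintype.card_fin]
  have hroot (i : Fin (k + 1)) : P.IsRoot (m i ^ 2) := by
    rw [IsRoot.def, eval_prod]
    exact Finset.prod_eq_zero (Finset.mem_univ i) (by simp)
  obtain ⟨s, hcard, hspos, hroots⟩ :=
    exists_finset_roots_derivative_X_mul_derivative_sq hdeg hsq (pow_pos (hpos 0) 2) hroot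
  obtain ⟨r, hr, hrpos, hrs⟩ :=
    Finset.exists_strictMono_sq_eq (N := 2 * (k + 1 - 1)) hcard hspos
  refine ⟨r, hr, hrpos, fun x y => ?_⟩
  rw [hfP, hess_eval_sq_add_sq, mul_eq_zero, or_iff_right four_ne_zero, ← IsRoot.def, hroots, hrs]
end

section
/- Let s̃(x) = Σ_{j=1}^n (j² + 1) ∏_{i≠j}(x² − i²) for n ≥ 2. Then s̃ is a polynomial of degree 2n−2 with exactly 2n−2 simple real roots, none of which is zero, and exactly n−1 of them are positive. -/
open Finset Polynomial
open scoped Pointwise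

/-!
At the node `a k` only the `k`-th summand of `∑ⱼ wⱼ ∏_{i ≠ j} (x² - aᵢ²)` survives, so for
positive weights and increasing positive nodes its value there has sign `(-1) ^ (n - k)`.
The intermediate value theorem gives a root in each `(a k, a (k + 1))`, and by evenness their
negatives are roots too: `2n - 2` distinct roots of a polynomial of degree `2n - 2`, hence all
of its roots, all simple, and none of them is `0`.
-/

theorem Finset.prod_abs_eq_neg_one_pow_mul_prod {ι R : Type*} [CommRing R] [LinearOrder R]
    [IsStrictOrderedRing R] (s : Finset ι) (f : ι → R) :
    ∏ i ∈ s, |f i| = (-1) ^ #{i ∈ s | f i < 0} * ∏ i ∈ s, f i := by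
  have h : ∀ i ∈ s, |f i| = (if f i < 0 then -1 else 1) * f i := by
    intro i _
    split_ifs with hi
    · rw [abs_of_neg hi, neg_one_mul]
    · rw [abs_of_nonneg (not_lt.1 hi), one_mul]
  rw [prod_congr rfl h, prod_mul_distrib, prod_ite, prod_const, prod_const_one, mul_one]

theorem exists_mem_Ioo_eq_zero_of_mul_neg {α : Type*} [ConditionallyCompleteLinearOrder α]
    [TopologicalSpace α] [OrderTopology α] [DenselyOrdered α] {f : α → ℝ} {a b : α}
    (hab : a ≤ b) (hf : ContinuousOn f (Set.Icc a b)) (h : f a * f b < 0) :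
    ∃ c ∈ Set.Ioo a b, f c = 0 := by
  rcases mul_neg_iff.1 h with ⟨ha, hb⟩ | ⟨ha, hb⟩
  · exact intermediate_value_Ioo' hab hf ⟨hb, ha⟩
  · exact intermediate_value_Ioo hab hf ⟨ha, hb⟩

namespace Polynomial

variable {R : Type*} [CommRing R] [IsDomain R] {p : R[X]}

theorem roots_eq_val_of_natDegree_le_card (hp : p ≠ 0) {s : Finset R}
    (hs : ∀ x ∈ s, p.IsRoot x) (hcard : p.natDegree ≤ #s) : p.roots = s.val :=
  (Multiset.eq_of_le_of_card_le
    (val_le_iff_val_subset.2 fun x hx => (mem_roots hp).2 (hs x hx))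
    ((card_roots' p).trans hcard)).symm

theorem not_isRoot_derivative_of_nodup_roots (hp : p ≠ 0) (hnd : p.roots.Nodup) {x : R}
    (hx : p.IsRoot x) : ¬ p.derivative.IsRoot x := by
  classical
  intro hx'
  have hmult := (one_lt_rootMultiplicity_iff_isRoot hp).2 ⟨hx, hx'⟩
  rw [← count_roots] at hmult
  exact absurd (Multiset.nodup_iff_count_le_one.1 hnd x) (not_le.2 hmult)

end Polynomial

theorem Finset.card_union_neg_of_forall_pos {α : Type*} [AddCommGroup α] [LinearOrder α]
    [IsOrderedAddMonoid α] {R : Finset α} (hR : ∀ x ∈ R, 0 < x) : #(R ∪ -R) = 2 * #R := by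
  rw [card_union_of_disjoint, card_neg, two_mul]
  exact disjoint_left.2 fun x hx hx' => (hR x hx).asymm (neg_pos.1 (hR (-x) (mem_neg'.1 hx')))

noncomputable def evenNodalSum (a w : ℕ → ℝ) (n : ℕ) : ℝ[X] :=
  ∑ j ∈ Icc 1 n, C (w j) * ∏ i ∈ (Icc 1 n).erase j, (X ^ 2 - C (a i ^ 2))

namespace evenNodalSum

variable (a w : ℕ → ℝ) (n : ℕ)

@[simp]
theorem eval_eq (x : ℝ) : (evenNodalSum a w n).eval x =
    ∑ j ∈ Icc 1 n, w j * ∏ i ∈ (Icc 1 n).erase j, (x ^ 2 - a i ^ 2) := by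
  simp [evenNodalSum, eval_finsetSum, eval_prod]

theorem eval_neg (x : ℝ) : (evenNodalSum a w n).eval (-x) = (evenNodalSum a w n).eval x := by
  simp only [eval_eq, neg_sq]

theorem eval_node {k : ℕ} (hk : k ∈ Icc 1 n) :
    (evenNodalSum a w n).eval (a k) = w k * ∏ i ∈ (Icc 1 n).erase k, (a k ^ 2 - a i ^ 2) := by
  rw [eval_eq]
  refine sum_eq_single_of_mem k hk fun j _ hjk => ?_
  exact mul_eq_zero_of_right _ (prod_eq_zero (mem_erase.2 ⟨hjk.symm, hk⟩) (sub_self _))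

theorem monic_nodal (j : ℕ) : (∏ i ∈ (Icc 1 n).erase j, (X ^ 2 - C (a i ^ 2))).Monic :=
  monic_prod_of_monic _ _ fun _ _ => monic_X_pow_sub_C _ two_ne_zero

theorem natDegree_nodal {j : ℕ} (hj : j ∈ Icc 1 n) :
    (∏ i ∈ (Icc 1 n).erase j, (X ^ 2 - C (a i ^ 2))).natDegree = 2 * n - 2 := by
  rw [natDegree_prod_of_monic _ _ fun _ _ => monic_X_pow_sub_C _ two_ne_zero]
  simp only [natDegree_X_pow_sub_C, sum_const, card_erase_of_mem hj, Nat.card_Icc, smul_eq_mul]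
  omega

theorem coeff_eq : (evenNodalSum a w n).coeff (2 * n - 2) = ∑ j ∈ Icc 1 n, w j := by
  rw [evenNodalSum, finsetSum_coeff]
  refine sum_congr rfl fun j hj => ?_
  rw [coeff_C_mul, ← natDegree_nodal a n hj, (monic_nodal a n j).coeff_natDegree, mul_one]

theorem natDegree_le : (evenNodalSum a w n).natDegree ≤ 2 * n - 2 :=
  natDegree_sum_le_of_forall_le _ _ fun _ hj =>
    (natDegree_C_mul_le _ _).trans (natDegree_nodal a n hj).le

variable {w} in
theorem natDegree_eq (hw : ∑ j ∈ Icc 1 n, w j ≠ 0) :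
    (evenNodalSum a w n).natDegree = 2 * n - 2 :=
  natDegree_eq_of_le_of_coeff_ne_zero (natDegree_le a w n) (by rwa [coeff_eq])

variable {w} in
theorem ne_zero (hw : ∑ j ∈ Icc 1 n, w j ≠ 0) : evenNodalSum a w n ≠ 0 := fun h =>
  hw (by rw [← coeff_eq a w n, h, coeff_zero])

variable {a w n}

theorem neg_one_pow_mul_eval_node_pos (hw : ∀ j ∈ Icc 1 n, 0 < w j)
    (ha : StrictMonoOn a (Icc 1 n : Finset ℕ)) (ha1 : 0 < a 1) {k : ℕ} (hk : k ∈ Icc 1 n) :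
    0 < (-1) ^ (n - k) * (evenNodalSum a w n).eval (a k) := by
  have hpos : ∀ i ∈ Icc 1 n, 0 < a i := fun i hi => by
    have hi' := mem_Icc.1 hi
    exact ha1.trans_le (ha.monotoneOn (by simp [hi'.1.trans hi'.2]) (mem_coe.2 hi) hi'.1)
  have hcount : #{i ∈ (Icc 1 n).erase k | a k ^ 2 - a i ^ 2 < 0} = n - k := by
    rw [← Nat.card_Ioc]
    congr 1
    ext i
    simp only [mem_filter, mem_erase, mem_Ioc, sub_neg]
    by_cases hi : i ∈ Icc 1 n
    · rw [sq_lt_sq₀ (hpos k hk).le (hpos i hi).le, ha.lt_iff_lt (mem_coe.2 hk) (mem_coe.2 hi)]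
      simp only [mem_Icc] at hi hk ⊢
      omega
    · simp only [mem_Icc] at hi hk ⊢
      omega
  rw [eval_node a w n hk, ← hcount, mul_left_comm, ← prod_abs_eq_neg_one_pow_mul_prod]
  refine mul_pos (hw k hk) (prod_pos fun i hi => abs_pos.2 (sub_ne_zero.2 fun h => ?_))
  obtain ⟨hik, hi⟩ := mem_erase.1 hi
  exact hik (ha.injOn (mem_coe.2 hi) (mem_coe.2 hk)
    ((pow_left_inj₀ (hpos i hi).le (hpos k hk).le two_ne_zero).1 h.symm))

theorem exists_root_Ioo (hw : ∀ j ∈ Icc 1 n, 0 < w j)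
    (ha : StrictMonoOn a (Icc 1 n : Finset ℕ)) (ha1 : 0 < a 1) {k : ℕ} (hk : 1 ≤ k)
    (hkn : k < n) :
    ∃ y ∈ Set.Ioo (a k) (a (k + 1)), (evenNodalSum a w n).eval y = 0 := by
  have hk' : k ∈ Icc 1 n := mem_Icc.2 ⟨hk, hkn.le⟩
  have hk1 : k + 1 ∈ Icc 1 n := mem_Icc.2 ⟨by omega, hkn⟩
  refine exists_mem_Ioo_eq_zero_of_mul_neg
    (ha.monotoneOn (mem_coe.2 hk') (mem_coe.2 hk1) k.le_succ)
    (evenNodalSum a w n).continuous.continuousOn ?_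
  have h := mul_pos (neg_one_pow_mul_eval_node_pos hw ha ha1 hk')
    (neg_one_pow_mul_eval_node_pos hw ha ha1 hk1)
  have hsign : (-1 : ℝ) ^ (n - k) = -(-1) ^ (n - (k + 1)) := by
    rw [show n - k = n - (k + 1) + 1 by omega, pow_succ, mul_neg_one]
  rw [hsign] at h
  have hsq : ((-1 : ℝ) ^ (n - (k + 1))) ^ 2 = 1 := by
    rw [← pow_mul, mul_comm, pow_mul, neg_one_sq, one_pow]
  nlinarith

theorem exists_roots_eq_union_neg (hn : 1 ≤ n) (hw : ∀ j ∈ Icc 1 n, 0 < w j)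
    (ha : StrictMonoOn a (Icc 1 n : Finset ℕ)) (ha1 : 0 < a 1) :
    ∃ R : Finset ℝ, (∀ x ∈ R, 0 < x) ∧ #R = n - 1 ∧
      (evenNodalSum a w n).roots = (R ∪ -R).val := by
  have ha_mono : ∀ i j, 1 ≤ i → i ≤ j → j ≤ n → a i ≤ a j := fun i j hi hij hj =>
    ha.monotoneOn (by simp; omega) (by simp; omega) hij
  choose r hr using fun k : Fin (n - 1) =>
    exists_root_Ioo hw ha ha1 (k := k + 1) (by omega) (by omega)
  have hr_mono : StrictMono r := fun k l hkl =>
    ((hr k).1.2.trans_le (ha_mono _ _ (by omega) (Nat.succ_le_succ hkl) (by omega))).trans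
      (hr l).1.1
  have hr_pos : ∀ x ∈ univ.image r, 0 < x := by
    simp only [mem_image, mem_univ, true_and, forall_exists_index, forall_apply_eq_imp_iff]
    exact fun k => (ha1.trans_le (ha_mono _ _ le_rfl (by omega) (by omega))).trans (hr k).1.1
  have hr_card : #(univ.image r) = n - 1 := by
    rw [card_image_of_injective _ hr_mono.injective, card_univ, Fintype.card_fin]
  have hw_sum : ∑ j ∈ Icc 1 n, w j ≠ 0 := (sum_pos hw (nonempty_Icc.2 hn)).ne'
  refine ⟨univ.image r, hr_pos, hr_card,
    roots_eq_val_of_natDegree_le_card (ne_zero a n hw_sum) ?_ ?_⟩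
  · simp only [mem_union, mem_neg', mem_image, mem_univ, true_and, IsRoot.def]
    rintro x (⟨k, rfl⟩ | ⟨k, hk⟩)
    · exact (hr k).2
    · rw [← neg_neg x, eval_neg, ← hk, (hr k).2]
  · rw [natDegree_eq a n hw_sum, card_union_neg_of_forall_pos hr_pos, hr_card]
    omega

end evenNodalSum

open Finset in
theorem s_polynomial_roots
    (n : ℕ) (hn : 2 ≤ n) (s : ℝ → ℝ)
    (hs : ∀ x, s x = ∑ j ∈ Icc 1 n, ((j : ℝ) ^ 2 + 1) *
      ∏ i ∈ (Icc 1 n).erase j, (x ^ 2 - (i : ℝ) ^ 2)) :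
    (∃ P : Polynomial ℝ, P.natDegree = 2 * n - 2 ∧ ∀ x, P.eval x = s x) ∧
    {x : ℝ | s x = 0}.ncard = 2 * n - 2 ∧
    (∀ x, s x = 0 → deriv s x ≠ 0) ∧
    s 0 ≠ 0 ∧
    {x : ℝ | 0 < x ∧ s x = 0}.ncard = n - 1 := by
  set P := evenNodalSum (↑) (fun j => (j : ℝ) ^ 2 + 1) n
  have hPs : s = fun x => P.eval x := funext fun x => by rw [hs, evenNodalSum.eval_eq]
  have hw : ∀ j ∈ Icc 1 n, 0 < (j : ℝ) ^ 2 + 1 := fun j _ => by positivity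
  have hw_sum : ∑ j ∈ Icc 1 n, ((j : ℝ) ^ 2 + 1) ≠ 0 :=
    (sum_pos hw (nonempty_Icc.2 (by omega))).ne'
  have hP : P ≠ 0 := evenNodalSum.ne_zero _ n hw_sum
  obtain ⟨R, hR_pos, hR_card, hroots⟩ := evenNodalSum.exists_roots_eq_union_neg (by omega) hw
    (Nat.strictMono_cast.strictMonoOn _) (by norm_num)
  have hzero : ∀ x, P.eval x = 0 ↔ x ∈ R ∪ -R := fun x => by
    rw [← mem_val, ← hroots, mem_roots hP, IsRoot.def]
  subst hPs
  refine ⟨⟨P, evenNodalSum.natDegree_eq _ n hw_sum, fun _ => rfl⟩, ?_, fun x hx => ?_, ?_, ?_⟩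
  · rw [show {x | P.eval x = 0} = ↑(R ∪ -R) by ext; exact hzero _, Set.ncard_coe_finset,
      card_union_neg_of_forall_pos hR_pos, hR_card]
    omega
  · rw [Polynomial.deriv]
    exact not_isRoot_derivative_of_nodup_roots hP (hroots ▸ (R ∪ -R).nodup) hx
  · rw [Ne, hzero, mem_union, mem_neg', neg_zero, or_self]
    exact fun h => (hR_pos 0 h).false
  · have hpos_roots : {x | 0 < x ∧ P.eval x = 0} = ↑R := by
      ext x
      simp only [Set.mem_ofPred_eq, hzero, mem_coe, mem_union, mem_neg']
      refine ⟨fun ⟨hx, hxR⟩ => hxR.resolve_right fun h => ?_,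
        fun hxR => ⟨hR_pos x hxR, .inl hxR⟩⟩
      linarith [hR_pos _ h]
    rw [hpos_roots, Set.ncard_coe_finset, hR_card]
end

section
/- Let s̃(x) = Σ_{j=1}^n (j² + 1) ∏_{i≠j}(x² − i²) with n ≥ 2. Then s̃(n−1) < 0 and s̃(n) > 0; in particular s̃ has a root in the open interval (n−1, n). -/
/-!
At a node `x = k` with `1 ≤ k ≤ n`, every term `j ≠ k` of `s̃` contains the factor
`k² - k² = 0`, so `s̃ k = (k² + 1) ∏_{i ≠ k} (k² - i²)`. Exactly the `n - k` factors with `i > k`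
are negative, so `s̃ n > 0` and `s̃ (n - 1) < 0`, and the intermediate value theorem gives the root.
-/

open Finset

theorem Finset.sum_mul_prod_erase_sub_of_mem {ι R : Type*} [DecidableEq ι] [CommRing R]
    (s : Finset ι) (w a : ι → R) {k : ι} (hk : k ∈ s) :
    ∑ j ∈ s, w j * ∏ i ∈ s.erase j, (a k - a i) =
      w k * ∏ i ∈ s.erase k, (a k - a i) := by
  refine sum_eq_single_of_mem k hk fun j _ hjk => ?_
  rw [prod_eq_zero (mem_erase.mpr ⟨hjk.symm, hk⟩) (sub_self _), mul_zero]

theorem neg_one_pow_mul_prod_erase_sq_sub_sq_pos {R : Type*} [CommRing R] [LinearOrder R]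
    [IsStrictOrderedRing R] {k n : ℕ} (hkn : k ≤ n) :
    0 < (-1 : R) ^ (n - k) * ∏ i ∈ (Icc 1 n).erase k, ((k : R) ^ 2 - (i : R) ^ 2) := by
  induction n, hkn using Nat.le_induction with
  | base =>
    rw [Nat.sub_self, pow_zero, one_mul]
    refine prod_pos fun i hi => ?_
    have hik : i < k := by grind
    have : (i : R) < k := by exact_mod_cast hik
    nlinarith [(Nat.cast_nonneg i : (0 : R) ≤ i)]
  | succ n hkn ih =>
    have hlt : (k : R) < (n + 1 : ℕ) := by exact_mod_cast Nat.lt_succ_of_le hkn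
    have hfactor : (k : R) ^ 2 - ((n + 1 : ℕ) : R) ^ 2 < 0 := by
      nlinarith [(Nat.cast_nonneg k : (0 : R) ≤ k)]
    rw [← insert_Icc_right_eq_Icc_add_one (by omega), erase_insert_of_ne (by omega),
      prod_insert (by simp), Nat.succ_sub hkn, pow_succ]
    nlinarith

open Finset in
theorem s_sign_change_near_n
    (n : ℕ) (hn : 2 ≤ n) (s : ℝ → ℝ)
    (hs : ∀ x, s x = ∑ j ∈ Icc 1 n, ((j : ℝ) ^ 2 + 1) *
      ∏ i ∈ (Icc 1 n).erase j, (x ^ 2 - (i : ℝ) ^ 2)) :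
    s ((n : ℝ) - 1) < 0 ∧ 0 < s (n : ℝ) ∧
      ∃ c ∈ Set.Ioo ((n : ℝ) - 1) (n : ℝ), s c = 0 := by
  have hnode : ∀ k ∈ Icc 1 n,
      s k = ((k : ℝ) ^ 2 + 1) * ∏ i ∈ (Icc 1 n).erase k, ((k : ℝ) ^ 2 - (i : ℝ) ^ 2) :=
    fun k hk => (hs k).trans <| sum_mul_prod_erase_sub_of_mem _
      (fun j : ℕ => (j : ℝ) ^ 2 + 1) (fun i : ℕ => (i : ℝ) ^ 2) hk
  have hneg : s ((n - 1 : ℕ) : ℝ) < 0 := by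
    have hsign := neg_one_pow_mul_prod_erase_sq_sub_sq_pos (R := ℝ) (Nat.sub_le n 1)
    rw [Nat.sub_sub_self (by omega), pow_one, neg_one_mul, neg_pos] at hsign
    rw [hnode _ (mem_Icc.mpr ⟨by omega, by omega⟩)]
    exact mul_neg_of_pos_of_neg (by positivity) hsign
  have hpos : 0 < s n := by
    have hsign := neg_one_pow_mul_prod_erase_sq_sub_sq_pos (R := ℝ) le_rfl (n := n)
    rw [Nat.sub_self, pow_zero, one_mul] at hsign
    rw [hnode _ (mem_Icc.mpr ⟨by omega, le_rfl⟩)]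
    positivity
  rw [Nat.cast_sub (by omega), Nat.cast_one] at hneg
  have hcont : Continuous s := by
    rw [funext hs]
    fun_prop
  exact ⟨hneg, hpos, intermediate_value_Ioo (by linarith) hcont.continuousOn ⟨hneg, hpos⟩⟩
end

section
/- Let a ≠ b be real numbers, a_m < ⋯ < a_1 < 0 < b_1 < ⋯ < b_n, and f(x,y) = (y − ax)(y − bx) ∏_{i=1}^m (x − a_i) ∏_{j=1}^n (x − b_j). Then the restriction of Hess f to the line x = a_k (for 1 ≤ k ≤ m) is Hess f(a_k, y) = −(2y − (a+b)a_k)² C_k², where C_k = ∏_{j=1}^n (a_k − b_j) · Σ_{l=1}^m ∏_{s≠l}(a_k − a_s). In particular Hess f(a_k, y) ≤ 0 with equality iff y = (a+b)a_k/2, provided C_k ≠ 0. -/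
open Finset

theorem hess_eq_neg_sq_of_forall_eq_zero {f : ℝ → ℝ → ℝ} {x : ℝ} (hf : ∀ s, f x s = 0)
    (y : ℝ) : Hess f x y = -(deriv (fun t => deriv (fun s => f s t) x) y) ^ 2 := by
  have hfx : (fun s => f x s) = fun _ => 0 := funext hf
  simp [Hess, hfx]

section Deriv

variable {𝕜 : Type*} [NontriviallyNormedField 𝕜]

theorem hasDerivAt_prod_sub {ι : Type*} [DecidableEq ι] (u : Finset ι) (c : ι → 𝕜) (x : 𝕜) :
    HasDerivAt (fun x => ∏ i ∈ u, (x - c i)) (∑ l ∈ u, ∏ i ∈ u.erase l, (x - c i)) x := by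
  simpa using HasDerivAt.fun_finsetProd (u := u) (f' := fun _ => (1 : 𝕜))
    fun i _ => (hasDerivAt_id x).sub_const (c i)

theorem DifferentiableAt.hasDerivAt_mul_of_eq_zero {g p : 𝕜 → 𝕜} {p' x : 𝕜} (hg : DifferentiableAt 𝕜 g x)
    (hp : HasDerivAt p p' x) (hpx : p x = 0) :
    HasDerivAt (fun x => g x * p x) (g x * p') x := by
  simpa [hpx] using hg.hasDerivAt.fun_mul hp

theorem deriv_sub_mul_sub_mul (u v c y : 𝕜) :
    deriv (fun t => (t - u) * (t - v) * c) y = (2 * y - (u + v)) * c := by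
  have h := (((hasDerivAt_id' y).sub_const u).fun_mul ((hasDerivAt_id' y).sub_const v)).mul_const c
  rw [h.deriv]
  ring

end Deriv

theorem neg_sq_mul_sq_nonpos_and_eq_zero_iff {u c : ℝ} (hc : c ≠ 0) :
    -u ^ 2 * c ^ 2 ≤ 0 ∧ (-u ^ 2 * c ^ 2 = 0 ↔ u = 0) :=
  ⟨by nlinarith [sq_nonneg u, sq_nonneg c], by simp [hc]⟩

theorem hessian_restricted_to_vertical_lines_general
    (m n : ℕ) (a b : ℝ)
    (A B : ℕ → ℝ)
    (f : ℝ → ℝ → ℝ)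
    (hf : ∀ x y, f x y = (y - a * x) * (y - b * x) *
      (∏ i ∈ Icc 1 m, (x - A i)) * ∏ j ∈ Icc 1 n, (x - B j)) :
    ∀ k, 1 ≤ k → k ≤ m →
      (∀ y, Hess f (A k) y = -(2 * y - (a + b) * A k) ^ 2 *
        ((∏ j ∈ Icc 1 n, (A k - B j)) *
          ∑ l ∈ Icc 1 m, ∏ s ∈ (Icc 1 m).erase l, (A k - A s)) ^ 2) ∧
      (((∏ j ∈ Icc 1 n, (A k - B j)) *
          ∑ l ∈ Icc 1 m, ∏ s ∈ (Icc 1 m).erase l, (A k - A s)) ≠ 0 →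
        ∀ y, Hess f (A k) y ≤ 0 ∧
          (Hess f (A k) y = 0 ↔ y = (a + b) * A k / 2)) := by
  intro k hk1 hkm
  set P : ℝ → ℝ := fun x => ∏ i ∈ Icc 1 m, (x - A i)
  set Q : ℝ → ℝ := fun x => ∏ j ∈ Icc 1 n, (x - B j)
  set C := Q (A k) * ∑ l ∈ Icc 1 m, ∏ s ∈ (Icc 1 m).erase l, (A k - A s)
  have hPk : P (A k) = 0 := prod_eq_zero (mem_Icc.mpr ⟨hk1, hkm⟩) (sub_self _)
  have hf' : ∀ x y, f x y = (y - a * x) * (y - b * x) * Q x * P x := fun x y => by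
    rw [hf]; ring
  have hfx : ∀ t, deriv (fun s => f s t) (A k) = (t - a * A k) * (t - b * A k) * C := by
    intro t
    have hq : DifferentiableAt ℝ (fun x => (t - a * x) * (t - b * x) * Q x) (A k) := by fun_prop
    simp only [hf']
    rw [(hq.hasDerivAt_mul_of_eq_zero (hasDerivAt_prod_sub _ A _) hPk).deriv]
    ring
  have hH : ∀ y, Hess f (A k) y = -(2 * y - (a + b) * A k) ^ 2 * C ^ 2 := by
    intro y
    rw [hess_eq_neg_sq_of_forall_eq_zero (by simp [hf', hPk]), funext hfx,
      deriv_sub_mul_sub_mul]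
    ring
  refine ⟨hH, fun hC y => ?_⟩
  rw [hH, ← sub_eq_zero (a := y), show y - (a + b) * A k / 2 = (2 * y - (a + b) * A k) / 2 by ring,
    div_eq_zero_iff, or_iff_left two_ne_zero]
  exact neg_sq_mul_sq_nonpos_and_eq_zero_iff hC

open Finset in
theorem hessian_restricted_to_vertical_lines
    (m n : ℕ) (a b : ℝ) (hab : a ≠ b)
    (A B : ℕ → ℝ)
    (hA : ∀ i j, 1 ≤ i → i < j → j ≤ m → A j < A i) (hA1 : A 1 < 0)
    (hB : ∀ i j, 1 ≤ i → i < j → j ≤ n → B i < B j) (hB1 : 0 < B 1)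
    (f : ℝ → ℝ → ℝ)
    (hf : ∀ x y, f x y = (y - a * x) * (y - b * x) *
      (∏ i ∈ Icc 1 m, (x - A i)) * ∏ j ∈ Icc 1 n, (x - B j)) :
    ∀ k, 1 ≤ k → k ≤ m →
      (∀ y, Hess f (A k) y = -(2 * y - (a + b) * A k) ^ 2 *
        ((∏ j ∈ Icc 1 n, (A k - B j)) *
          ∑ l ∈ Icc 1 m, ∏ s ∈ (Icc 1 m).erase l, (A k - A s)) ^ 2) ∧
      (((∏ j ∈ Icc 1 n, (A k - B j)) *
          ∑ l ∈ Icc 1 m, ∏ s ∈ (Icc 1 m).erase l, (A k - A s)) ≠ 0 →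
        ∀ y, Hess f (A k) y ≤ 0 ∧
          (Hess f (A k) y = 0 ↔ y = (a + b) * A k / 2)) :=
  hessian_restricted_to_vertical_lines_general m n a b A B f hf
end

section
/- With f as above, the restriction of Hess f to the line y = ax satisfies Hess f(x, ax) = −(a − b)² (g′(x))², where g(x) = x ∏_{i=1}^m (x − a_i) ∏_{j=1}^n (x − b_j). In particular Hess f(x, ax) ≤ 0 for all x, with equality exactly at the m+n critical points of g. -/
open Polynomial

theorem hess_of_quadratic_in_snd (u v w : ℝ[X]) (f : ℝ → ℝ → ℝ)
    (hf : ∀ x y, f x y = y ^ 2 * u.eval x + y * v.eval x + w.eval x) (x y : ℝ) :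
    Hess f x y =
      (y ^ 2 * (derivative (derivative u)).eval x + y * (derivative (derivative v)).eval x +
          (derivative (derivative w)).eval x) * (2 * u.eval x) -
        (2 * y * (derivative u).eval x + (derivative v).eval x) ^ 2 := by
  have hfst : ∀ y, (fun s => f s y) = fun s => (y ^ 2 • u + y • v + w).eval s := by
    intro y; funext s; simp only [hf, eval_add, eval_smul, smul_eq_mul]
  have hsnd : (fun s => f x s) =
      fun s => (C (u.eval x) * X ^ 2 + C (v.eval x) * X + C (w.eval x)).eval s := by
    funext s; simp only [hf, eval_add, eval_mul, eval_C, eval_pow, eval_X]; ring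
  have hmixed : (fun t => deriv (fun s => f s t) x) = fun t =>
      (C ((derivative u).eval x) * X ^ 2 + C ((derivative v).eval x) * X +
        C ((derivative w).eval x)).eval t := by
    funext t
    rw [hfst, Polynomial.deriv]
    simp only [derivative_add, derivative_smul, eval_add, eval_smul, smul_eq_mul, eval_mul, eval_C,
      eval_pow, eval_X]
    ring
  rw [Hess, hfst, hsnd, hmixed]
  -- `Polynomial.deriv` has to fire before `eval_add` splits the arguments of `deriv`.
  simp only [Polynomial.deriv]
  simp only [derivative_add, derivative_smul, derivative_mul, derivative_C, derivative_X_pow_succ,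
    derivative_X, derivative_one, map_zero, eval_add, eval_smul, eval_mul, eval_C, eval_X, eval_one,
    eval_zero, smul_eq_mul, pow_one, Nat.cast_one]
  ring

theorem hess_mul_sub_mul_sub_on_line (a b : ℝ) (p : ℝ[X]) (f : ℝ → ℝ → ℝ)
    (hf : ∀ x y, f x y = (y - a * x) * (y - b * x) * p.eval x) (x : ℝ) :
    Hess f x (a * x) = -(a - b) ^ 2 * ((derivative (X * p)).eval x) ^ 2 := by
  rw [hess_of_quadratic_in_snd p (-C (a + b) * X * p) (C (a * b) * X ^ 2 * p) f
    (fun x y => by simp only [hf, eval_mul, eval_neg, eval_C, eval_X, eval_pow]; ring)]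
  simp only [derivative_add, derivative_neg, derivative_mul, derivative_C, derivative_X_pow_succ,
    derivative_X, derivative_one, map_zero, eval_add, eval_neg, eval_mul, eval_C, eval_X, eval_one,
    eval_zero, eval_pow, pow_one, Nat.cast_one]
  ring

theorem ncard_setOf_derivative_prod_X_sub_C_eq_zero_add_one {s : Finset ℝ} (hs : s.Nonempty) :
    {x | (derivative (∏ r ∈ s, (X - C r))).eval x = 0}.ncard + 1 = s.card := by
  set P := ∏ r ∈ s, (X - C r)
  have hdeg : P.natDegree = s.card := natDegree_finsetProd_X_sub_C_eq_card s id
  have hP' : derivative P ≠ 0 := by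
    rw [Ne, derivative_eq_zero, hdeg]
    exact hs.card_pos.ne'
  have hroots : {x | (derivative P).eval x = 0} = ↑(derivative P).roots.toFinset := by
    ext x
    simp [hP']
  rw [hroots, Set.ncard_coe_finset]
  apply le_antisymm
  · calc (derivative P).roots.toFinset.card + 1
        ≤ Multiset.card (derivative P).roots + 1 := by gcongr; exact Multiset.toFinset_card_le _
      _ ≤ (derivative P).natDegree + 1 := by gcongr; exact card_roots' _
      _ ≤ s.card := by have := natDegree_derivative_le P; have := hs.card_pos; omega
  · simpa [P, roots_prod_X_sub_C] using card_roots_toFinset_le_derivative P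

theorem disjoint_of_forall_neg_of_forall_pos {s t : Finset ℝ} (hs : ∀ r ∈ s, r < 0)
    (ht : ∀ r ∈ t, 0 < r) : Disjoint s t :=
  Finset.disjoint_left.2 fun r hrs hrt => (hs r hrs).not_gt (ht r hrt)

theorem zero_notMem_union_of_forall_neg_of_forall_pos {s t : Finset ℝ} (hs : ∀ r ∈ s, r < 0)
    (ht : ∀ r ∈ t, 0 < r) : 0 ∉ s ∪ t := by
  rw [Finset.mem_union, not_or]
  exact ⟨fun h => (hs 0 h).false, fun h => (ht 0 h).false⟩

theorem prod_X_sub_C_insert_zero_union {s t : Finset ℝ} (hs : ∀ r ∈ s, r < 0)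
    (ht : ∀ r ∈ t, 0 < r) :
    ∏ r ∈ insert 0 (s ∪ t), (X - C r) = X * ((∏ r ∈ s, (X - C r)) * ∏ r ∈ t, (X - C r)) := by
  rw [Finset.prod_insert (zero_notMem_union_of_forall_neg_of_forall_pos hs ht),
    Finset.prod_union (disjoint_of_forall_neg_of_forall_pos hs ht), map_zero, sub_zero]

theorem card_insert_zero_union {s t : Finset ℝ} (hs : ∀ r ∈ s, r < 0) (ht : ∀ r ∈ t, 0 < r) :
    (insert 0 (s ∪ t)).card = s.card + t.card + 1 := by
  rw [Finset.card_insert_of_notMem (zero_notMem_union_of_forall_neg_of_forall_pos hs ht),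
    Finset.card_union_of_disjoint (disjoint_of_forall_neg_of_forall_pos hs ht)]

open Finset in
theorem hessian_restricted_to_line_y_eq_ax
    (m n : ℕ) (a b : ℝ) (hab : a ≠ b)
    (A B : ℕ → ℝ)
    (hA : ∀ i j, 1 ≤ i → i < j → j ≤ m → A j < A i) (hA1 : A 1 < 0)
    (hB : ∀ i j, 1 ≤ i → i < j → j ≤ n → B i < B j) (hB1 : 0 < B 1)
    (f : ℝ → ℝ → ℝ)
    (hf : ∀ x y, f x y = (y - a * x) * (y - b * x) *
      (∏ i ∈ Icc 1 m, (x - A i)) * ∏ j ∈ Icc 1 n, (x - B j))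
    (g : ℝ → ℝ)
    (hg : ∀ x, g x = x * (∏ i ∈ Icc 1 m, (x - A i)) * ∏ j ∈ Icc 1 n, (x - B j)) :
    (∀ x, Hess f x (a * x) = -(a - b) ^ 2 * (deriv g x) ^ 2) ∧
    (∀ x, Hess f x (a * x) ≤ 0 ∧ (Hess f x (a * x) = 0 ↔ deriv g x = 0)) ∧
    {x : ℝ | deriv g x = 0}.ncard = m + n := by
  have hAanti : StrictAntiOn A (Icc 1 m : Finset ℕ) := fun i hi j hj hij =>
    hA i j (mem_Icc.1 hi).1 hij (mem_Icc.1 hj).2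
  have hBmono : StrictMonoOn B (Icc 1 n : Finset ℕ) := fun i hi j hj hij =>
    hB i j (mem_Icc.1 hi).1 hij (mem_Icc.1 hj).2
  have hneg : ∀ r ∈ (Icc 1 m).image A, r < 0 := by
    simp only [mem_image, mem_Icc]
    rintro _ ⟨i, hi, rfl⟩
    exact (hAanti.antitoneOn (mem_coe.2 (mem_Icc.2 ⟨le_rfl, hi.1.trans hi.2⟩))
      (mem_coe.2 (mem_Icc.2 hi)) hi.1).trans_lt hA1
  have hpos : ∀ r ∈ (Icc 1 n).image B, 0 < r := by
    simp only [mem_image, mem_Icc]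
    rintro _ ⟨j, hj, rfl⟩
    exact hB1.trans_le (hBmono.monotoneOn (mem_coe.2 (mem_Icc.2 ⟨le_rfl, hj.1.trans hj.2⟩))
      (mem_coe.2 (mem_Icc.2 hj)) hj.1)
  set q := (∏ r ∈ (Icc 1 m).image A, (X - C r)) * ∏ r ∈ (Icc 1 n).image B, (X - C r)
  have hq : ∀ x, q.eval x = (∏ i ∈ Icc 1 m, (x - A i)) * ∏ j ∈ Icc 1 n, (x - B j) := by
    simp [q, prod_image hAanti.injOn, prod_image hBmono.injOn, eval_prod]
  have hdg : ∀ x, deriv g x = (derivative (X * q)).eval x := by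
    have hgq : g = fun x => (X * q).eval x :=
      funext fun x => by rw [hg, eval_mul, eval_X, hq, mul_assoc]
    intro x
    rw [hgq, Polynomial.deriv]
  have hHess : ∀ x, Hess f x (a * x) = -(a - b) ^ 2 * deriv g x ^ 2 := fun x => by
    rw [hess_mul_sub_mul_sub_on_line a b q f (fun x y => by rw [hf, hq, mul_assoc]), hdg]
  refine ⟨hHess, fun x => ⟨?_, ?_⟩, ?_⟩
  · rw [hHess, neg_mul, neg_nonpos]
    positivity
  · simp [hHess, sub_eq_zero, hab]
  · have hcount := ncard_setOf_derivative_prod_X_sub_C_eq_zero_add_one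
      (insert_nonempty 0 ((Icc 1 m).image A ∪ (Icc 1 n).image B))
    rw [prod_X_sub_C_insert_zero_union hneg hpos, card_insert_zero_union hneg hpos,
      card_image_of_injOn hAanti.injOn, card_image_of_injOn hBmono.injOn, Nat.card_Icc,
      Nat.card_Icc] at hcount
    simp only [hdg, q]
    omega
end

section
/- Let f̃(x) = ∏_{k=1}^n (x² − k²)/(x² + 1) with n ≥ 2, and let x₀ be a critical point of f̃ in the interval (n−1, n). Then x₀ is a local minimum of f̃ and f̃″(x₀) > 0. -/
/-!
On `(n - 1, n)` none of the factors `(x² - k²)/(x² + 1)` vanishes, exactly one of them (`k = n`) is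
negative, so `f̃ < 0`, and `f̃' = f̃ · h` with `h` the sum of the logarithmic derivatives of the
factors. At a critical point `h = 0`, hence `f̃'' = f̃ · h'`. Each summand of `h` is strictly
decreasing there, so `h' < 0` and `f̃'' > 0`; the second derivative test finishes the proof.
-/

open Finset Filter Topology

section LogarithmicDerivative

variable {𝕜 𝔸 : Type*} [NontriviallyNormedField 𝕜] [NormedCommRing 𝔸] [NormedAlgebra 𝕜 𝔸]

theorem HasDerivAt.fun_finsetProd_of_eq_mul {ι : Type*} {s : Finset ι} {g h : ι → 𝕜 → 𝔸}
    {x : 𝕜} (hg : ∀ i ∈ s, HasDerivAt (g i) (g i x * h i x) x) :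
    HasDerivAt (∏ i ∈ s, g i ·) ((∏ i ∈ s, g i x) * ∑ i ∈ s, h i x) x := by
  classical
  convert HasDerivAt.fun_finsetProd hg using 1
  rw [mul_sum]
  refine sum_congr rfl fun i hi => ?_
  rw [smul_eq_mul, ← mul_assoc, prod_erase_mul _ _ hi]

theorem hasDerivAt_deriv_of_eq_mul {F h : 𝕜 → 𝔸} {h' : 𝔸} {x : 𝕜}
    (hF : ∀ᶠ y in 𝓝 x, HasDerivAt F (F y * h y) y) (hh : HasDerivAt h h' x) (hx : h x = 0) :
    HasDerivAt (deriv F) (F x * h') x := by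
  have hFh := (hF.self_of_nhds.mul hh).congr_of_eventuallyEq (hF.mono fun _ hy => hy.deriv)
  simpa [hx] using hFh

end LogarithmicDerivative

noncomputable def ratFactor (k x : ℝ) : ℝ := (x ^ 2 - k ^ 2) / (x ^ 2 + 1)

noncomputable def ratFactorLogDeriv (k x : ℝ) : ℝ :=
  2 * x * (k ^ 2 + 1) / ((x ^ 2 + 1) * (x ^ 2 - k ^ 2))

theorem hasDerivAt_ratFactor (k : ℝ) {x : ℝ} (hx : x ^ 2 ≠ k ^ 2) :
    HasDerivAt (ratFactor k) (ratFactor k x * ratFactorLogDeriv k x) x := by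
  have hden : x ^ 2 + 1 ≠ 0 := by positivity
  have hquot := ((hasDerivAt_pow 2 x).sub_const (k ^ 2)).div
    ((hasDerivAt_pow 2 x).add_const 1) hden
  refine hquot.congr_deriv ?_
  have hnum : x ^ 2 - k ^ 2 ≠ 0 := sub_ne_zero.2 hx
  simp only [ratFactor, ratFactorLogDeriv]
  field_simp
  ring

theorem hasDerivAt_ratFactorLogDeriv (k : ℝ) {x : ℝ} (hx : x ^ 2 ≠ k ^ 2) :
    HasDerivAt (ratFactorLogDeriv k)
      (-(2 * (k ^ 2 + 1) * (3 * x ^ 4 + (1 - k ^ 2) * x ^ 2 + k ^ 2)) /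
        ((x ^ 2 + 1) * (x ^ 2 - k ^ 2)) ^ 2) x := by
  have hden : (x ^ 2 + 1) * (x ^ 2 - k ^ 2) ≠ 0 :=
    mul_ne_zero (by positivity) (sub_ne_zero.2 hx)
  have hquot := (((hasDerivAt_id x).const_mul 2).mul_const (k ^ 2 + 1)).div
    (((hasDerivAt_pow 2 x).add_const 1).mul ((hasDerivAt_pow 2 x).sub_const (k ^ 2))) hden
  refine hquot.congr_deriv ?_
  simp only [Pi.mul_apply, id_eq]
  field_simp
  ring

theorem exists_neg_hasDerivAt_ratFactorLogDeriv {x k : ℝ} (hx : 0 < x) (hk : 0 ≤ k)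
    (hkx : k < x + 1) (hxk : x ^ 2 ≠ k ^ 2) :
    ∃ d < 0, HasDerivAt (ratFactorLogDeriv k) d x := by
  refine ⟨_, ?_, hasDerivAt_ratFactorLogDeriv k hxk⟩
  have hquartic : 0 < 3 * x ^ 4 + (1 - k ^ 2) * x ^ 2 + k ^ 2 := by
    rcases le_total x 1 with hx1 | hx1
    · nlinarith [mul_nonneg (sq_nonneg k) (by nlinarith : (0 : ℝ) ≤ 1 - x ^ 2), pow_pos hx 4]
    · have hk2 : k ^ 2 * (x ^ 2 - 1) ≤ (x + 1) ^ 2 * (x ^ 2 - 1) := by gcongr; nlinarith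
      nlinarith [mul_nonneg (pow_pos hx 3).le (sub_nonneg.2 hx1)]
  have hden : (x ^ 2 + 1) * (x ^ 2 - k ^ 2) ≠ 0 :=
    mul_ne_zero (by positivity) (sub_ne_zero.2 hxk)
  exact div_neg_of_neg_of_pos (by nlinarith) (pow_two_pos_of_ne_zero hden)

section LastInterval

variable {n : ℕ} {x : ℝ}

theorem sq_ne_natCast_sq_of_mem_Ioo {k : ℕ} (hk : 1 ≤ k) (hx : x ∈ Set.Ioo ((n : ℝ) - 1) n) :
    x ^ 2 ≠ (k : ℝ) ^ 2 := by
  obtain ⟨hlo, hhi⟩ := hx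
  intro hsq
  have hxk : x = k := by
    have hk1 : (1 : ℝ) ≤ k := by exact_mod_cast hk
    nlinarith [sq_nonneg (x - k), sq_nonneg (x + k)]
  subst hxk
  have hkn : k < n := by exact_mod_cast hhi
  have hnk : n < k + 1 := by exact_mod_cast (show (n : ℝ) < k + 1 by linarith)
  omega

theorem prod_ratFactor_neg (hn : 1 ≤ n) (hx : x ∈ Set.Ioo ((n : ℝ) - 1) n) :
    ∏ k ∈ Icc 1 n, ratFactor k x < 0 := by
  obtain ⟨m, rfl⟩ : ∃ m, n = m + 1 := ⟨n - 1, by omega⟩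
  obtain ⟨hlo, hhi⟩ := hx
  push_cast at hlo hhi
  have hx0 : 0 ≤ x := by linarith [(Nat.cast_nonneg m : (0 : ℝ) ≤ m)]
  rw [prod_Icc_succ_top (by omega)]
  refine mul_neg_of_pos_of_neg (prod_pos fun k hk => ?_) ?_
  · have hkm : (k : ℝ) ≤ m := by exact_mod_cast (mem_Icc.1 hk).2
    exact div_pos (by nlinarith [(Nat.cast_nonneg k : (0 : ℝ) ≤ k)]) (by positivity)
  · exact div_neg_of_neg_of_pos (by push_cast; nlinarith) (by positivity)

theorem exists_neg_hasDerivAt_sum_ratFactorLogDeriv (hn : 1 ≤ n)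
    (hx : x ∈ Set.Ioo ((n : ℝ) - 1) n) :
    ∃ d < 0, HasDerivAt (fun y => ∑ k ∈ Icc 1 n, ratFactorLogDeriv k y) d x := by
  have hx0 : 0 < x := by
    have : (1 : ℝ) ≤ n := by exact_mod_cast hn
    linarith [hx.1]
  choose! d hd_neg hd using fun k (hk : k ∈ Icc 1 n) =>
    exists_neg_hasDerivAt_ratFactorLogDeriv (k := (k : ℝ)) hx0 (Nat.cast_nonneg k)
      (by linarith [hx.1, (show (k : ℝ) ≤ n by exact_mod_cast (mem_Icc.1 hk).2)])
      (sq_ne_natCast_sq_of_mem_Ioo (mem_Icc.1 hk).1 hx)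
  exact ⟨_, sum_neg hd_neg (nonempty_Icc.2 hn), HasDerivAt.fun_sum hd⟩

end LastInterval

open Finset in
theorem critical_point_in_last_interval_is_min
    (n : ℕ) (hn : 2 ≤ n) (f : ℝ → ℝ)
    (hf : ∀ x, f x = ∏ k ∈ Icc 1 n, ((x ^ 2 - (k : ℝ) ^ 2) / (x ^ 2 + 1)))
    (x₀ : ℝ) (hx₀ : x₀ ∈ Set.Ioo ((n : ℝ) - 1) (n : ℝ))
    (hcrit : deriv f x₀ = 0) :
    IsLocalMin f x₀ ∧ 0 < deriv (deriv f) x₀ := by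
  have hn1 : 1 ≤ n := by omega
  obtain rfl : f = fun x => ∏ k ∈ Icc 1 n, ratFactor k x := funext hf
  have hfh : ∀ x ∈ Set.Ioo ((n : ℝ) - 1) n,
      HasDerivAt (fun x => ∏ k ∈ Icc 1 n, ratFactor k x)
        ((∏ k ∈ Icc 1 n, ratFactor k x) * ∑ k ∈ Icc 1 n, ratFactorLogDeriv k x) x :=
    fun x hx => HasDerivAt.fun_finsetProd_of_eq_mul fun k hk =>
      hasDerivAt_ratFactor k (sq_ne_natCast_sq_of_mem_Ioo (mem_Icc.1 hk).1 hx)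
  have hneg := prod_ratFactor_neg hn1 hx₀
  have hh0 : ∑ k ∈ Icc 1 n, ratFactorLogDeriv k x₀ = 0 := by
    rw [(hfh x₀ hx₀).deriv] at hcrit
    exact (mul_eq_zero.1 hcrit).resolve_left hneg.ne
  obtain ⟨d, hd_neg, hd⟩ := exists_neg_hasDerivAt_sum_ratFactorLogDeriv hn1 hx₀
  have hf'' := hasDerivAt_deriv_of_eq_mul
    (eventually_of_mem (Ioo_mem_nhds hx₀.1 hx₀.2) hfh) hd hh0
  have hpos : (0 : ℝ) < deriv (deriv _) x₀ := hf''.deriv ▸ mul_pos_of_neg_of_neg hneg hd_neg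
  exact ⟨isLocalMin_of_deriv_deriv_pos hpos hcrit (hfh x₀ hx₀).continuousAt, hpos⟩
end
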